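/- arXiv:1102.3055 — 5 statements merged into one kernel-verified Lean document; each statement's English description precedes it below -/
import Mathlib

section
/- Let Γ be a group and let K₁, …, K_k be normal subgroups of Γ such that the quotient groups G_j = Γ/K_j are pairwise mutually orthogonal. Then Γ/(K₁ ∩ ⋯ ∩ K_k) is isomorphic to the direct product G₁ × ⋯ × G_k. -/
universe u v

/-- Two groups are *mutually orthogonal* if every group that is a surjective
homomorphic image of both of them is trivial. -/
def MutuallyOrthogonal (G : Type u) (H : Type v) [Group G] [Group H] : Prop :=
  ∀ (Q : Type (max u v)) [Group Q],
    (∃ f : G →* Q, Function.Surjective f) →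
    (∃ g : H →* Q, Function.Surjective g) →
    Subsingleton Q

instance iInf_normal {Γ : Type u} [Group Γ] {ι : Sort*} (K : ι → Subgroup Γ)
    [∀ j, (K j).Normal] : (⨅ j, K j).Normal :=
  ⟨fun n hn g => Subgroup.mem_iInf.2 fun j =>
    Subgroup.Normal.conj_mem inferInstance n (Subgroup.mem_iInf.1 hn j) g⟩

section aux

lemma orth_of_mulEquiv {G H H' : Type u} [Group G] [Group H] [Group H']
    (h : MutuallyOrthogonal G H) (e : H' ≃* H) : MutuallyOrthogonal G H' := by
  rintro Q _ hf ⟨g, hg⟩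
  exact h Q hf ⟨g.comp e.symm.toMonoidHom, hg.comp e.symm.surjective⟩

lemma orth_prod {G H H' : Type u} [Group G] [Group H] [Group H']
    (h1 : MutuallyOrthogonal G H) (h2 : MutuallyOrthogonal G H') :
    MutuallyOrthogonal G (H × H') := by
  rintro Q _ ⟨f, hf⟩ ⟨g, hg⟩
  set Q2 : Subgroup Q := (g.comp (MonoidHom.inr H H')).range with hQ2
  have hmem : ∀ b : H', g (1, b) ∈ Q2 := fun b => ⟨b, rfl⟩
  have hcomm : ∀ (a : H) (y : Q), y ∈ Q2 → g (a, 1) * y = y * g (a, 1) := by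
    rintro a y ⟨b, rfl⟩
    simp only [MonoidHom.comp_apply, MonoidHom.inr_apply, ← map_mul,
      Prod.mk_mul_mk, mul_one, one_mul]
  have hsplit : ∀ p : H × H', g p = g (p.1, 1) * g (1, p.2) := by
    rintro ⟨a, b⟩
    rw [← map_mul]; simp
  haveI hnormal : Q2.Normal := by
    constructor
    intro y hy q
    obtain ⟨⟨a, b⟩, rfl⟩ := hg q
    have hb : (g (1, b)) * y * (g (1, b))⁻¹ ∈ Q2 :=
      Q2.mul_mem (Q2.mul_mem (hmem b) hy) (Q2.inv_mem (hmem b))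
    rw [hsplit (a, b)]
    have heq : g (a, 1) * g (1, b) * y * (g (a, 1) * g (1, b))⁻¹
        = g (a, 1) * (g (1, b) * y * (g (1, b))⁻¹) * (g (a, 1))⁻¹ := by
      group
    rw [heq, hcomm a _ hb]
    simpa using hb
  -- Q ⧸ Q2 is a common quotient of G and H, hence trivial, so Q2 = ⊤.
  have hsub : Subsingleton (Q ⧸ Q2) := by
    refine h1 (Q ⧸ Q2) ⟨(QuotientGroup.mk' Q2).comp f,
      (QuotientGroup.mk'_surjective Q2).comp hf⟩ ?_
    refine ⟨(QuotientGroup.mk' Q2).comp (g.comp (MonoidHom.inl H H')), ?_⟩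
    intro q
    obtain ⟨q, rfl⟩ := QuotientGroup.mk'_surjective Q2 q
    obtain ⟨⟨a, b⟩, rfl⟩ := hg q
    refine ⟨a, ?_⟩
    simp only [MonoidHom.comp_apply, MonoidHom.inl_apply]
    have hkey : (g (a, 1))⁻¹ * (g (a, 1) * g (1, b)) = g (1, b) := by group
    rw [QuotientGroup.mk'_apply, QuotientGroup.mk'_apply, QuotientGroup.eq, hsplit (a, b)]
    show (g (a, 1))⁻¹ * (g (a, 1) * g (1, b)) ∈ Q2
    rw [hkey]
    exact hmem b
  have htop : Q2 = ⊤ := by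
    rw [Subgroup.eq_top_iff']
    intro q
    rw [← QuotientGroup.eq_one_iff]
    exact Subsingleton.elim _ _
  -- so Q is a surjective image of H', hence trivial.
  refine h2 Q ⟨f, hf⟩ ⟨g.comp (MonoidHom.inr H H'), ?_⟩
  intro q
  have : q ∈ Q2 := htop ▸ Subgroup.mem_top q
  exact this

lemma orth_pi {G : Type u} [Group G] : ∀ (n : ℕ) (H : Fin n → Type u)
    [∀ i, Group (H i)], (∀ i, MutuallyOrthogonal G (H i)) →
    MutuallyOrthogonal G (∀ i, H i) := by
  intro n
  induction n with
  | zero =>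
    rintro H _ _ Q _ ⟨f, hf⟩ ⟨g, hg⟩
    haveI : Subsingleton (∀ i : Fin 0, H i) := ⟨fun a b => funext fun i => i.elim0⟩
    exact hg.subsingleton
  | succ n ih =>
    intro H _ horth
    have hrest : MutuallyOrthogonal G (∀ i : Fin n, H i.succ) :=
      ih (fun i => H i.succ) (fun i => horth i.succ)
    have hprod : MutuallyOrthogonal G (H 0 × ∀ i : Fin n, H i.succ) :=
      orth_prod (horth 0) hrest
    refine orth_of_mulEquiv hprod ?_
    exact
      { toFun := fun f => (f 0, fun i => f i.succ)
        invFun := fun p => Fin.cons p.1 p.2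
        left_inv := fun f => by
          funext i
          refine Fin.cases ?_ ?_ i
          · simp
          · intro j; simp
        right_inv := fun p => by simp
        map_mul' := fun f g => rfl }

/-- Chinese-remainder style equivalence for two normal subgroups with
`A ⊔ C = ⊤`. -/
lemma quotient_inf_equiv_prod {Γ : Type u} [Group Γ] (A C : Subgroup Γ)
    [A.Normal] [C.Normal] (h : A ⊔ C = ⊤) :
    Nonempty ((Γ ⧸ (A ⊓ C)) ≃* (Γ ⧸ A) × (Γ ⧸ C)) := by
  set φ : Γ →* (Γ ⧸ A) × (Γ ⧸ C) := (QuotientGroup.mk' A).prod (QuotientGroup.mk' C)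
  have hker : φ.ker = A ⊓ C := by
    ext x
    simp [φ, MonoidHom.mem_ker, Prod.ext_iff, QuotientGroup.eq_one_iff,
      Subgroup.mem_inf]
  have hsurj : Function.Surjective φ := by
    rintro ⟨x, y⟩
    obtain ⟨x, rfl⟩ := QuotientGroup.mk'_surjective A x
    obtain ⟨y, rfl⟩ := QuotientGroup.mk'_surjective C y
    have hx : x⁻¹ * y ∈ (↑(A ⊔ C) : Set Γ) := by rw [h]; trivial
    rw [Subgroup.mul_normal A C] at hx
    obtain ⟨a, ha, c, hc, hac⟩ := hx
    have hac' : a * c = x⁻¹ * y := hac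
    refine ⟨x * a, ?_⟩
    have hy : x * a = y * c⁻¹ := by
      have : y = x * (a * c) := by rw [hac']; group
      rw [this]; group
    refine Prod.ext ?_ ?_
    · show QuotientGroup.mk' A (x * a) = QuotientGroup.mk' A x
      rw [QuotientGroup.mk'_apply, QuotientGroup.mk'_apply,
        QuotientGroup.eq_iff_div_mem]
      rw [div_eq_mul_inv]
      exact Subgroup.Normal.conj_mem ‹A.Normal› a ha x
    · show QuotientGroup.mk' C (x * a) = QuotientGroup.mk' C y
      rw [hy, QuotientGroup.mk'_apply, QuotientGroup.mk'_apply,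
        QuotientGroup.eq_iff_div_mem]
      rw [div_eq_mul_inv]
      exact Subgroup.Normal.conj_mem ‹C.Normal› _ (C.inv_mem hc) y
  exact ⟨(QuotientGroup.quotientMulEquivOfEq hker.symm).trans
    (QuotientGroup.quotientKerEquivOfSurjective φ hsurj)⟩

end aux

/-- If `K₁, …, K_k` are normal subgroups of `Γ` whose quotients are pairwise
mutually orthogonal, then `Γ ⧸ (K₁ ⊓ ⋯ ⊓ K_k)` is isomorphic to the direct
product of the quotients `Γ ⧸ K_j`. -/
theorem quotient_iInf_mulEquiv_pi {Γ : Type u} [Group Γ] {k : ℕ}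
    (K : Fin k → Subgroup Γ) [∀ j, (K j).Normal]
    (horth : ∀ i j, i ≠ j → MutuallyOrthogonal (Γ ⧸ K i) (Γ ⧸ K j)) :
    Nonempty ((Γ ⧸ ⨅ j, K j) ≃* ∀ j, Γ ⧸ K j) := by
  induction k with
  | zero =>
    have htop : (⨅ j : Fin 0, K j) = ⊤ := by simp
    haveI : Subsingleton (Γ ⧸ ⨅ j : Fin 0, K j) := by
      rw [htop]; exact QuotientGroup.subsingleton_quotient_top
    haveI : Subsingleton (∀ j : Fin 0, Γ ⧸ K j) := ⟨fun a b => funext fun i => i.elim0⟩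
    exact ⟨{ toFun := fun _ => fun i => i.elim0
             invFun := fun _ => 1
             left_inv := fun _ => Subsingleton.elim _ _
             right_inv := fun _ => Subsingleton.elim _ _
             map_mul' := fun _ _ => Subsingleton.elim _ _ }⟩
  | succ k ih =>
    set A := K 0 with hA
    set C := ⨅ j : Fin k, K j.succ with hC
    obtain ⟨e1⟩ := ih (fun j => K j.succ) (fun i j hij =>
      horth i.succ j.succ (fun hh => hij (Fin.succ_injective k hh)))
    have hinf : (⨅ j, K j) = A ⊓ C := by
      apply le_antisymm
      · exact le_inf (iInf_le _ 0) (le_iInf fun j => iInf_le _ j.succ)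
      · refine le_iInf fun j => ?_
        refine Fin.cases ?_ ?_ j
        · exact inf_le_left
        · intro j
          exact inf_le_right.trans (iInf_le _ j)
    -- A ⊔ C = ⊤
    have hsup : A ⊔ C = ⊤ := by
      have horthC : MutuallyOrthogonal (Γ ⧸ A) (Γ ⧸ C) := by
        have hpi : MutuallyOrthogonal (Γ ⧸ A) (∀ j : Fin k, Γ ⧸ K j.succ) :=
          orth_pi k (fun j => Γ ⧸ K j.succ)
            (fun j => horth 0 j.succ (Fin.succ_ne_zero j).symm)
        exact orth_of_mulEquiv hpi e1
      have hsub : Subsingleton (Γ ⧸ (A ⊔ C)) := by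
        refine horthC (Γ ⧸ (A ⊔ C)) ?_ ?_
        · refine ⟨QuotientGroup.map A (A ⊔ C) (MonoidHom.id Γ) le_sup_left, ?_⟩
          intro q
          obtain ⟨x, rfl⟩ := QuotientGroup.mk_surjective q
          exact ⟨QuotientGroup.mk x, rfl⟩
        · refine ⟨QuotientGroup.map C (A ⊔ C) (MonoidHom.id Γ) le_sup_right, ?_⟩
          intro q
          obtain ⟨x, rfl⟩ := QuotientGroup.mk_surjective q
          exact ⟨QuotientGroup.mk x, rfl⟩
      rw [Subgroup.eq_top_iff']
      intro x
      rw [← QuotientGroup.eq_one_iff]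
      exact Subsingleton.elim _ _
    obtain ⟨e2⟩ := quotient_inf_equiv_prod A C hsup
    refine ⟨((QuotientGroup.quotientMulEquivOfEq hinf).trans e2).trans ?_⟩
    refine (MulEquiv.prodCongr (MulEquiv.refl _) e1).trans ?_
    exact
      { toFun := fun p => Fin.cons p.1 p.2
        invFun := fun f => (f 0, fun i => f i.succ)
        left_inv := fun p => by simp
        right_inv := fun f => by
          funext i
          refine Fin.cases ?_ ?_ i
          · simp
          · intro j; simp
        map_mul' := fun p q => by
          funext i
          refine Fin.cases ?_ ?_ i
          · simp
          · intro j; simp }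
end

section
/- Let G₀, G₁, …, G_k be pairwise mutually orthogonal finite groups. For each j = 0, …, k let (a₁ⱼ, b₁ⱼ, c₁ⱼ) and (a₂ⱼ, b₂ⱼ, c₂ⱼ) be generating triples of G_j (so each triple generates G_j and has product equal to 1), such that (a₁₀, b₁₀, c₁₀) and (a₂₀, b₂₀, c₂₀) form an unmixed Beauville structure on G₀, and such that for each j = 1, …, k the order of a₁ⱼ divides the order of a₁₀, the order of b₁ⱼ divides the order of b₁₀, and the order of c₁ⱼ divides the order of c₁₀. Then the componentwise elements a₁ = (a₁₀,…,a₁ₖ), b₁ = (b₁₀,…,b₁ₖ), c₁ = (c₁₀,…,c₁ₖ), a₂ = (a₂₀,…,a₂ₖ), b₂ = (b₂₀,…,b₂ₖ), c₂ = (c₂₀,…,c₂ₖ) form an unmixed Beauville structure on the direct product G = G₀ × G₁ × ⋯ × G_k. -/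
universe u v

/-- An unmixed Beauville structure on a group `G`. -/
def IsBeauvilleStructure {G : Type u} [Group G] (a₁ b₁ c₁ a₂ b₂ c₂ : G) : Prop :=
  a₁ * b₁ * c₁ = 1 ∧ a₂ * b₂ * c₂ = 1 ∧
  Subgroup.closure ({a₁, b₁, c₁} : Set G) = ⊤ ∧
  Subgroup.closure ({a₂, b₂, c₂} : Set G) = ⊤ ∧
  (1 : ℚ) / (orderOf a₁ : ℚ) + 1 / (orderOf b₁ : ℚ) + 1 / (orderOf c₁ : ℚ) < 1 ∧
  (1 : ℚ) / (orderOf a₂ : ℚ) + 1 / (orderOf b₂ : ℚ) + 1 / (orderOf c₂ : ℚ) < 1 ∧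
  ∀ x ∈ ({a₁, b₁, c₁} : Set G), ∀ y ∈ ({a₂, b₂, c₂} : Set G),
    ∀ i j : ℤ, IsConj (x ^ i) (y ^ j) → x ^ i = 1

theorem MutuallyOrthogonal.symm' {A B : Type u} [Group A] [Group B]
    (h : MutuallyOrthogonal A B) : MutuallyOrthogonal B A :=
  fun Q _ h1 h2 => h Q h2 h1

theorem MutuallyOrthogonal.of_mulEquiv {A A' B : Type u} [Group A] [Group A'] [Group B]
    (e : A ≃* A') (h : MutuallyOrthogonal A B) : MutuallyOrthogonal A' B := by
  rintro Q _ ⟨f, hf⟩ hg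
  exact h Q ⟨f.comp e.toMonoidHom, hf.comp e.surjective⟩ hg

theorem mutuallyOrthogonal_of_subsingleton {A B : Type u} [Group A] [Group B] [Subsingleton A] :
    MutuallyOrthogonal A B := by
  rintro Q _ ⟨f, hf⟩ _
  refine ⟨fun x y => ?_⟩
  obtain ⟨a, rfl⟩ := hf x
  obtain ⟨b, rfl⟩ := hf y
  rw [Subsingleton.elim a b]

theorem MutuallyOrthogonal.prod {A B C : Type u} [Group A] [Group B] [Group C]
    (hAC : MutuallyOrthogonal A C) (hBC : MutuallyOrthogonal B C) :
    MutuallyOrthogonal (A × B) C := by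
  rintro Q _ ⟨f, hf⟩ ⟨g, hg⟩
  set N : Subgroup Q := (f.comp (MonoidHom.inr A B)).range with hNdef
  have hN : N.Normal := by
    constructor
    intro x hx q
    obtain ⟨p, rfl⟩ := hf q
    obtain ⟨b, rfl⟩ := hx
    refine ⟨p.2 * b * p.2⁻¹, ?_⟩
    have h1 : (MonoidHom.inr A B) (p.2 * b * p.2⁻¹) =
        p * (MonoidHom.inr A B) b * p⁻¹ := by
      ext <;> simp
    rw [MonoidHom.comp_apply, h1, map_mul, map_mul, map_inv]
    rfl
  -- Q ⧸ N is a common quotient of A and C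
  have hsub : Subsingleton (Q ⧸ N) := by
    refine hAC (Q ⧸ N) ⟨(QuotientGroup.mk' N).comp (f.comp (MonoidHom.inl A B)), ?_⟩
      ⟨(QuotientGroup.mk' N).comp g, (QuotientGroup.mk'_surjective N).comp hg⟩
    intro q
    obtain ⟨q, rfl⟩ := QuotientGroup.mk'_surjective N q
    obtain ⟨⟨a, b⟩, rfl⟩ := hf q
    refine ⟨a, ?_⟩
    simp only [MonoidHom.comp_apply, QuotientGroup.mk'_apply]
    rw [QuotientGroup.eq]
    have : (f ((MonoidHom.inl A B) a))⁻¹ * f (a, b) = f ((MonoidHom.inr A B) b) := by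
      rw [← map_inv, ← map_mul]
      congr 1
      ext <;> simp
    rw [this]
    exact ⟨b, rfl⟩
  -- hence N = ⊤, so f ∘ inr is surjective
  have hinr : Function.Surjective (f.comp (MonoidHom.inr A B)) := by
    intro q
    have : (QuotientGroup.mk q : Q ⧸ N) = 1 := Subsingleton.elim _ _
    rw [QuotientGroup.eq_one_iff] at this
    exact this
  exact hBC Q ⟨f.comp (MonoidHom.inr A B), hinr⟩ ⟨g, hg⟩

def piSuccMulEquiv {n : ℕ} (G : Fin (n + 1) → Type u) [∀ j, Group (G j)] :
    (∀ j, G j) ≃* (G 0 × ∀ j : Fin n, G j.succ) where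
  toFun f := (f 0, fun j => f j.succ)
  invFun p := Fin.cons p.1 p.2
  left_inv f := by
    ext j
    refine Fin.cases ?_ ?_ j <;> simp
  right_inv p := by
    refine Prod.ext ?_ ?_ <;> simp
  map_mul' f g := rfl

theorem mutuallyOrthogonal_pi {n : ℕ} (G : Fin n → Type u) [∀ j, Group (G j)]
    (C : Type u) [Group C] (h : ∀ j, MutuallyOrthogonal (G j) C) :
    MutuallyOrthogonal (∀ j, G j) C := by
  induction n with
  | zero => exact mutuallyOrthogonal_of_subsingleton
  | succ n ih =>
      exact ((h 0).prod (ih (fun j => G j.succ) (fun j => h j.succ))).of_mulEquiv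
        (piSuccMulEquiv G).symm

theorem inr_mem_of_orth {A B : Type u} [Group A] [Group B]
    (h : MutuallyOrthogonal A B) (K : Subgroup (A × B))
    (h1 : K.map (MonoidHom.fst A B) = ⊤) (h2 : K.map (MonoidHom.snd A B) = ⊤) :
    ∀ b : B, ((1 : A), b) ∈ K := by
  have hfst : ∀ a : A, ∃ b : B, (a, b) ∈ K := by
    intro a
    have : a ∈ K.map (MonoidHom.fst A B) := h1 ▸ Subgroup.mem_top a
    obtain ⟨⟨a', b⟩, hmem, rfl⟩ := this
    exact ⟨b, hmem⟩
  have hsnd : ∀ b : B, ∃ a : A, (a, b) ∈ K := by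
    intro b
    have : b ∈ K.map (MonoidHom.snd A B) := h2 ▸ Subgroup.mem_top b
    obtain ⟨⟨a, b'⟩, hmem, rfl⟩ := this
    exact ⟨a, hmem⟩
  set NB : Subgroup B := K.comap (MonoidHom.inr A B) with hNB
  have hNBnormal : NB.Normal := by
    constructor
    intro x hx c
    obtain ⟨a, ha⟩ := hsnd c
    have : ((a, c) : A × B) * (1, x) * (a, c)⁻¹ ∈ K := K.mul_mem (K.mul_mem ha hx) (K.inv_mem ha)
    have heq : ((a, c) : A × B) * (1, x) * (a, c)⁻¹ = (1, c * x * c⁻¹) := by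
      ext <;> simp
    rw [heq] at this
    exact this
  choose s hs using hfst
  have key : ∀ (a : A) (b : B), (a, b) ∈ K →
      (QuotientGroup.mk (s a) : B ⧸ NB) = QuotientGroup.mk b := by
    intro a b hb
    rw [QuotientGroup.eq]
    show ((1 : A), (s a)⁻¹ * b) ∈ K
    have heq : ((1 : A), (s a)⁻¹ * b) = ((a, s a) : A × B)⁻¹ * (a, b) := by
      ext <;> simp
    rw [heq]
    exact K.mul_mem (K.inv_mem (hs a)) hb
  let ψ : A →* B ⧸ NB :=
    { toFun := fun a => QuotientGroup.mk (s a)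
      map_one' := by
        have := key 1 1 K.one_mem
        simpa using this
      map_mul' := by
        intro a a'
        have hmem : ((a * a', s a * s a') : A × B) ∈ K := K.mul_mem (hs a) (hs a')
        have := key (a * a') (s a * s a') hmem
        simpa using this }
  have hψ : Function.Surjective ψ := by
    intro q
    obtain ⟨b, rfl⟩ := QuotientGroup.mk_surjective q
    obtain ⟨a, ha⟩ := hsnd b
    exact ⟨a, key a b ha⟩
  have hsub : Subsingleton (B ⧸ NB) :=
    h (B ⧸ NB) ⟨ψ, hψ⟩ ⟨QuotientGroup.mk' NB, QuotientGroup.mk'_surjective NB⟩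
  intro b
  have : (QuotientGroup.mk b : B ⧸ NB) = 1 := Subsingleton.elim _ _
  rw [QuotientGroup.eq_one_iff] at this
  exact this

theorem prod_subgroup_eq_top_of_orth {A B : Type u} [Group A] [Group B]
    (h : MutuallyOrthogonal A B) (K : Subgroup (A × B))
    (h1 : K.map (MonoidHom.fst A B) = ⊤) (h2 : K.map (MonoidHom.snd A B) = ⊤) :
    K = ⊤ := by
  have hb : ∀ b : B, ((1 : A), b) ∈ K := inr_mem_of_orth h K h1 h2
  have ha : ∀ a : A, (a, (1 : B)) ∈ K := by
    set K' : Subgroup (B × A) := K.map (MulEquiv.prodComm : A × B ≃* B × A).toMonoidHom with hK'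
    have e1 : K'.map (MonoidHom.fst B A) = ⊤ := by
      rw [hK', Subgroup.map_map]
      have : (MonoidHom.fst B A).comp (MulEquiv.prodComm : A × B ≃* B × A).toMonoidHom
          = MonoidHom.snd A B := rfl
      rw [this, h2]
    have e2 : K'.map (MonoidHom.snd B A) = ⊤ := by
      rw [hK', Subgroup.map_map]
      have : (MonoidHom.snd B A).comp (MulEquiv.prodComm : A × B ≃* B × A).toMonoidHom
          = MonoidHom.fst A B := rfl
      rw [this, h1]
    intro a
    have := inr_mem_of_orth h.symm' K' e1 e2 a
    rw [hK', Subgroup.mem_map_equiv] at this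
    simpa using this
  rw [Subgroup.eq_top_iff']
  intro ⟨a, b⟩
  have : ((a, b) : A × B) = (a, 1) * (1, b) := by ext <;> simp
  rw [this]
  exact K.mul_mem (ha a) (hb b)

theorem pi_subgroup_eq_top {n : ℕ} (G : Fin n → Type u) [∀ j, Group (G j)]
    (horth : ∀ i j, i ≠ j → MutuallyOrthogonal (G i) (G j))
    (H : Subgroup (∀ j, G j))
    (hs : ∀ j, H.map (Pi.evalMonoidHom G j) = ⊤) : H = ⊤ := by
  induction n with
  | zero =>
      rw [Subgroup.eq_top_iff']
      intro x
      rw [Subsingleton.elim x 1]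
      exact H.one_mem
  | succ n ih =>
      set e := piSuccMulEquiv G with he
      set K := H.map e.toMonoidHom with hK
      have h1 : K.map (MonoidHom.fst _ _) = ⊤ := by
        rw [hK, Subgroup.map_map]
        have : (MonoidHom.fst (G 0) (∀ j : Fin n, G j.succ)).comp e.toMonoidHom
            = Pi.evalMonoidHom G 0 := rfl
        rw [this]
        exact hs 0
      have h2 : K.map (MonoidHom.snd _ _) = ⊤ := by
        refine ih (fun j => G j.succ)
          (fun i j hij => horth i.succ j.succ (fun hc => hij (Fin.succ_injective n hc)))
          (K.map (MonoidHom.snd _ _)) ?_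
        intro j
        rw [hK, Subgroup.map_map, Subgroup.map_map]
        have : ((Pi.evalMonoidHom (fun j : Fin n => G j.succ) j).comp
            (MonoidHom.snd (G 0) (∀ j : Fin n, G j.succ))).comp e.toMonoidHom
            = Pi.evalMonoidHom G j.succ := rfl
        rw [this]
        exact hs j.succ
      have horth0 : MutuallyOrthogonal (G 0) (∀ j : Fin n, G j.succ) :=
        (mutuallyOrthogonal_pi (fun j => G j.succ) (G 0)
          (fun j => horth j.succ 0 (Fin.succ_ne_zero j))).symm'
      have hKtop : K = ⊤ := prod_subgroup_eq_top_of_orth horth0 K h1 h2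
      have := Subgroup.map_injective e.injective
        (hKtop.trans (Subgroup.map_top_of_surjective e.toMonoidHom e.surjective).symm)
      exact this

/-- Lemma 6.2: given pairwise mutually orthogonal finite groups
`G₀, G₁, …, G_k` with generating triples as described, where the triples of
`G₀` form a Beauville structure and the orders of the first triple of each
`G_j` (`j ≠ 0`) divide the corresponding orders in `G₀`, the componentwise
triples form a Beauville structure on the direct product. -/
theorem isBeauvilleStructure_pi_of_dominant {k : ℕ} (G : Fin (k + 1) → Type u)
    [∀ j, Group (G j)] [∀ j, Finite (G j)]
    (horth : ∀ i j, i ≠ j → MutuallyOrthogonal (G i) (G j))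
    (a₁ b₁ c₁ a₂ b₂ c₂ : ∀ j, G j)
    (hprod1 : ∀ j, a₁ j * b₁ j * c₁ j = 1)
    (hprod2 : ∀ j, a₂ j * b₂ j * c₂ j = 1)
    (hgen1 : ∀ j, Subgroup.closure ({a₁ j, b₁ j, c₁ j} : Set (G j)) = ⊤)
    (hgen2 : ∀ j, Subgroup.closure ({a₂ j, b₂ j, c₂ j} : Set (G j)) = ⊤)
    (hB0 : IsBeauvilleStructure (a₁ 0) (b₁ 0) (c₁ 0) (a₂ 0) (b₂ 0) (c₂ 0))
    (hdiv : ∀ j, j ≠ 0 → orderOf (a₁ j) ∣ orderOf (a₁ 0) ∧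
      orderOf (b₁ j) ∣ orderOf (b₁ 0) ∧ orderOf (c₁ j) ∣ orderOf (c₁ 0)) :
    IsBeauvilleStructure a₁ b₁ c₁ a₂ b₂ c₂ := by
  obtain ⟨hp1, hp2, hg1, hg2, hineq1, hineq2, hconj0⟩ := hB0
  have hkey : ∀ x : (∀ j, G j), (1 : ℚ) / (orderOf x : ℚ) ≤ 1 / (orderOf (x 0) : ℚ) := by
    intro x
    have h0 : 0 < orderOf (x 0) := orderOf_pos _
    have hdvd : orderOf (x 0) ∣ orderOf x := orderOf_map_dvd (Pi.evalMonoidHom G 0) x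
    have hle : orderOf (x 0) ≤ orderOf x := Nat.le_of_dvd (orderOf_pos x) hdvd
    exact one_div_le_one_div_of_le (by exact_mod_cast h0) (by exact_mod_cast hle)
  refine ⟨?_, ?_, ?_, ?_, ?_, ?_, ?_⟩
  · funext j; exact hprod1 j
  · funext j; exact hprod2 j
  · refine pi_subgroup_eq_top G horth _ (fun j => ?_)
    rw [MonoidHom.map_closure]
    have him : (Pi.evalMonoidHom G j) '' {a₁, b₁, c₁} = {a₁ j, b₁ j, c₁ j} := by
      simp [Set.image_insert_eq, Set.image_singleton]
    rw [him]
    exact hgen1 j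
  · refine pi_subgroup_eq_top G horth _ (fun j => ?_)
    rw [MonoidHom.map_closure]
    have him : (Pi.evalMonoidHom G j) '' {a₂, b₂, c₂} = {a₂ j, b₂ j, c₂ j} := by
      simp [Set.image_insert_eq, Set.image_singleton]
    rw [him]
    exact hgen2 j
  · linarith [hkey a₁, hkey b₁, hkey c₁, hineq1]
  · linarith [hkey a₂, hkey b₂, hkey c₂, hineq2]
  · intro x hx y hy i j hc
    simp only [Set.mem_insert_iff, Set.mem_singleton_iff] at hx hy
    have hx0 : x 0 = a₁ 0 ∨ x 0 = b₁ 0 ∨ x 0 = c₁ 0 := by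
      rcases hx with rfl | rfl | rfl <;> simp
    have hy0 : y 0 = a₂ 0 ∨ y 0 = b₂ 0 ∨ y 0 = c₂ 0 := by
      rcases hy with rfl | rfl | rfl <;> simp
    have hxm : ∀ m : Fin (k + 1), m ≠ 0 → orderOf (x m) ∣ orderOf (x 0) := by
      intro m hm
      rcases hx with rfl | rfl | rfl
      · exact (hdiv m hm).1
      · exact (hdiv m hm).2.1
      · exact (hdiv m hm).2.2
    have hc0 : IsConj ((x 0) ^ i) ((y 0) ^ j) := by
      have h := (Pi.evalMonoidHom G 0).map_isConj hc
      rw [map_zpow, map_zpow] at h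
      exact h
    have h1 : (x 0) ^ i = 1 :=
      hconj0 (x 0) (by simpa [Set.mem_insert_iff] using hx0) (y 0)
        (by simpa [Set.mem_insert_iff] using hy0) i j hc0
    have hdvd0 : (orderOf (x 0) : ℤ) ∣ i := orderOf_dvd_iff_zpow_eq_one.mpr h1
    have hall : ∀ m, (x m) ^ i = 1 := by
      intro m
      rw [← orderOf_dvd_iff_zpow_eq_one]
      refine dvd_trans ?_ hdvd0
      by_cases hm : m = 0
      · subst hm; exact dvd_refl _
      · exact_mod_cast hxm m hm
    funext m
    show (x ^ i) m = (1 : ∀ j, G j) m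
    rw [show (x ^ i) m = (x m) ^ i from map_zpow (Pi.evalMonoidHom G m) x i, Pi.one_apply]
    exact hall m
end

section
/- Let G be a finite group with no subgroup of index 2, and suppose G is generated by elements a, b where a has order exactly 2, b has order exactly 3, and ab has order exactly n, for some integer n ≥ 7. Set t = n/2 if n is even and t = n if n is odd. Then there exist elements u, v, w of G with uvw = 1, each of order exactly t, which generate G (i.e. G is a smooth quotient of the triangle group Δ(t,t,t)). -/
/-!
With `c = (a * b) ^ 2`, the three conjugates `b c b⁻¹`, `c`, `b⁻¹ c b` have order
`n / gcd n 2 = t` and multiply to `1`. Conjugation by `b` permutes them cyclically and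
conjugation by `a` swaps the first two, so they generate a normal subgroup `K`.
The quotient `G ⧸ K` is generated by the images `x`, `y` of `a`, `b`, with
`x² = y³ = (x y)² = 1`, so it is a quotient of `S₃`: `⟨y⟩` is normal in it with cyclic
quotient of order at most `2`. As `G` has no subgroup of index `2`, this quotient is trivial,
so `x ∈ ⟨y⟩` has order dividing `2` and `3`, hence `x = 1`, then `y = 1`, and `K = G`.
-/

open Subgroup

section

variable {G : Type*} [Group G]

theorem Subgroup.normal_closure_of_conj_mem {s t : Set G} (hs : closure s = ⊤)
    (hfin : ∀ g ∈ s, IsOfFinOrder g)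
    (h : ∀ g ∈ s, ∀ x ∈ t, g * x * g⁻¹ ∈ closure t) :
    (closure t).Normal := by
  have hgen : ∀ g ∈ s, ∀ k ∈ closure t, g * k * g⁻¹ ∈ closure t := by
    intro g hg k hk
    induction hk using closure_induction with
    | mem x hx => exact h g hg x hx
    | one => simp
    | mul x y _ _ hx hy => simpa [mul_assoc] using mul_mem hx hy
    | inv x _ hx => simpa [mul_assoc] using inv_mem hx
  have hmon : ∀ g ∈ Submonoid.closure s, ∀ k ∈ closure t, g * k * g⁻¹ ∈ closure t := by
    intro g hg
    induction hg using Submonoid.closure_induction with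
    | mem g hg => exact hgen g hg
    | one => simp
    | mul g g' _ _ hg hg' => exact fun k hk ↦ by simpa [mul_assoc] using hg _ (hg' k hk)
  -- Generators of finite order generate `G` already as a monoid.
  refine ⟨fun k hk g ↦ hmon g ?_ k hk⟩
  rw [← closure_toSubmonoid_of_isOfFinOrder hfin, hs]
  trivial

theorem MonoidHom.closure_image_eq_top {H : Type*} [Group H] {f : G →* H}
    (hf : Function.Surjective f) {s : Set G} (hs : closure s = ⊤) : closure (f '' s) = ⊤ := by
  rw [← MonoidHom.map_closure, hs, map_top_of_surjective f hf]

theorem Subgroup.index_ne_two_of_surjective {H : Type*} [Group H] {f : G →* H}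
    (hf : Function.Surjective f) (hindex : ∀ K : Subgroup G, K.index ≠ 2) (K : Subgroup H) :
    K.index ≠ 2 := by
  rw [← K.index_comap_of_surjective hf]
  exact hindex _

theorem orderOf_sq (x : G) :
    orderOf (x ^ 2) = if orderOf x % 2 = 0 then orderOf x / 2 else orderOf x := by
  rw [orderOf_pow' x two_ne_zero]
  split_ifs with h
  · rw [Nat.gcd_eq_right (Nat.dvd_of_mod_eq_zero h)]
  · rw [(Nat.odd_iff.mpr (by omega)).coprime_two_right, Nat.div_one]

theorem eq_one_of_sq_eq_one_of_pow_three_eq_one {x : G} (h2 : x ^ 2 = 1) (h3 : x ^ 3 = 1) :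
    x = 1 := by
  simpa using pow_gcd_eq_one.mpr ⟨h2, h3⟩

theorem eq_one_of_zpowers_eq_top_of_sq_eq_one {x : G} (hx : zpowers x = ⊤) (h2 : x ^ 2 = 1)
    (hindex : (⊥ : Subgroup G).index ≠ 2) : x = 1 := by
  have hcard : orderOf x = (⊥ : Subgroup G).index := by
    rw [index_bot, ← Nat.card_zpowers, hx, card_top]
  rw [← orderOf_eq_one_iff]
  rcases (Nat.dvd_prime Nat.prime_two).mp (orderOf_dvd_of_pow_eq_one h2) with h | h
  · exact h
  · exact absurd (hcard ▸ h) hindex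

theorem eq_one_of_index_ne_two_of_sq_of_pow_three_of_mul_sq {x y : G}
    (hgen : closure {x, y} = ⊤) (hindex : ∀ H : Subgroup G, H.index ≠ 2)
    (hx : x ^ 2 = 1) (hy : y ^ 3 = 1) (hxy : (x * y) ^ 2 = 1) : x = 1 ∧ y = 1 := by
  have hconj : x * y * x⁻¹ = y⁻¹ := by
    rw [inv_eq_of_mul_eq_one_left (by rw [← sq, hx] : x * x = 1)]
    exact eq_inv_of_mul_eq_one_left (by rw [mul_assoc, ← sq, hxy])
  have : (zpowers y).Normal := by
    rw [zpowers_eq_closure]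
    refine normal_closure_of_conj_mem hgen ?_ ?_
    · rintro g (rfl | rfl)
      exacts [isOfFinOrder_iff_pow_eq_one.mpr ⟨2, two_pos, hx⟩,
        isOfFinOrder_iff_pow_eq_one.mpr ⟨3, three_pos, hy⟩]
    · rintro g (rfl | rfl) _ rfl
      · rw [hconj]; exact inv_mem (mem_closure_singleton_self _)
      · simp [mem_closure_singleton_self]
  have hx1 : x = 1 := by
    let π := QuotientGroup.mk' (zpowers y)
    have hπy : π y = 1 := (QuotientGroup.eq_one_iff y).mpr (mem_zpowers y)
    have hπx : π x = 1 := by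
      refine eq_one_of_zpowers_eq_top_of_sq_eq_one ?_ (by rw [← map_pow, hx, map_one])
        (index_ne_two_of_surjective (QuotientGroup.mk'_surjective _) hindex ⊥)
      have := MonoidHom.closure_image_eq_top (QuotientGroup.mk'_surjective (zpowers y)) hgen
      rwa [Set.image_pair, hπy, Set.pair_comm, closure_insert_one, ← zpowers_eq_closure] at this
    obtain ⟨k, rfl⟩ := mem_zpowers_iff.mp ((QuotientGroup.eq_one_iff x).mp hπx)
    refine eq_one_of_sq_eq_one_of_pow_three_eq_one hx ?_
    rw [← zpow_natCast, ← zpow_mul, mul_comm, zpow_mul, zpow_natCast, hy, one_zpow]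
  exact ⟨hx1, eq_one_of_sq_eq_one_of_pow_three_eq_one (by simpa [hx1] using hxy) hy⟩

theorem Subgroup.eq_top_of_mul_sq_mem {N : Subgroup G} [N.Normal] {a b : G}
    (hgen : closure {a, b} = ⊤) (hindex : ∀ H : Subgroup G, H.index ≠ 2)
    (ha : a ^ 2 = 1) (hb : b ^ 3 = 1) (hab : (a * b) ^ 2 ∈ N) : N = ⊤ := by
  let π := QuotientGroup.mk' N
  have hπ : Function.Surjective π := QuotientGroup.mk'_surjective N
  obtain ⟨ha1, hb1⟩ :=
    eq_one_of_index_ne_two_of_sq_of_pow_three_of_mul_sq (x := π a) (y := π b)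
      (by simpa [Set.image_pair] using MonoidHom.closure_image_eq_top hπ hgen)
      (index_ne_two_of_surjective hπ hindex)
      (by rw [← map_pow, ha, map_one]) (by rw [← map_pow, hb, map_one])
      (by rw [← map_mul, ← map_pow]; exact (QuotientGroup.eq_one_iff _).mpr hab)
  rw [eq_top_iff, ← hgen, closure_le]
  rintro _ (rfl | rfl)
  exacts [(QuotientGroup.eq_one_iff _).mp ha1, (QuotientGroup.eq_one_iff _).mp hb1]

theorem conj_sq_mul_sq_mul_conj_inv_sq_eq_one {a b : G} (ha : a ^ 2 = 1) (hb : b ^ 3 = 1) :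
    b * (a * b) ^ 2 * b⁻¹ * (a * b) ^ 2 * (b⁻¹ * (a * b) ^ 2 * b) = 1 := by
  have ha2 : a * a = 1 := by rw [← sq, ha]
  have hb3 : b * (b * b) = 1 := by rw [← pow_three, hb]
  have hA (x : G) : a * (a * x) = x := by rw [← mul_assoc, ha2, one_mul]
  have hB (x : G) : b * (b * (b * x)) = x := by
    rw [← mul_assoc, ← mul_assoc, mul_assoc b, hb3, one_mul]
  have hb' : b⁻¹ = b * b := inv_eq_of_mul_eq_one_left (by rw [mul_assoc, hb3])
  simp only [pow_two, hb', mul_assoc, hA, hB, hb3, mul_one]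

theorem conj_mem_closure_conj_sq {a b : G} (ha : a ^ 2 = 1) (hb : b ^ 3 = 1) :
    ∀ g ∈ ({a, b} : Set G),
      ∀ x ∈ ({b * (a * b) ^ 2 * b⁻¹, (a * b) ^ 2, b⁻¹ * (a * b) ^ 2 * b} : Set G),
        g * x * g⁻¹ ∈
          closure ({b * (a * b) ^ 2 * b⁻¹, (a * b) ^ 2, b⁻¹ * (a * b) ^ 2 * b} : Set G) := by
  have ha2 : a * a = 1 := by rw [← sq, ha]
  have hb3 : b * (b * b) = 1 := by rw [← pow_three, hb]
  have hA (x : G) : a * (a * x) = x := by rw [← mul_assoc, ha2, one_mul]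
  have hB (x : G) : b * (b * (b * x)) = x := by
    rw [← mul_assoc, ← mul_assoc, mul_assoc b, hb3, one_mul]
  have ha' : a⁻¹ = a := inv_eq_of_mul_eq_one_left ha2
  have hb' : b⁻¹ = b * b := inv_eq_of_mul_eq_one_left (by rw [mul_assoc, hb3])
  rintro g (rfl | rfl) x (rfl | rfl | rfl)
  case inl.inr.inr =>
    -- `g` swaps the first two elements, whose product is the inverse of the third.
    rw [show g * (b⁻¹ * (g * b) ^ 2 * b) * g⁻¹ =
        (b * (g * b) ^ 2 * b⁻¹)⁻¹ * ((g * b) ^ 2)⁻¹ by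
      simp only [pow_two, hb', ha', mul_inv_rev, mul_assoc, hB, hb3, mul_one]]
    exact mul_mem (inv_mem (Subgroup.subset_closure (by simp)))
      (inv_mem (Subgroup.subset_closure (by simp)))
  all_goals
    exact Subgroup.subset_closure (by
      simp only [Set.mem_insert_iff, Set.mem_singleton_iff, pow_two, hb', ha', mul_assoc, hA, hB,
        ha2, hb3, mul_one, true_or, or_true])

end

theorem smooth_ttt_quotient_of_23n_general {G : Type*} [Group G]
    (hindex : ∀ H : Subgroup G, H.index ≠ 2)
    (a b : G) (n : ℕ)
    (ha : orderOf a = 2) (hb : orderOf b = 3) (hab : orderOf (a * b) = n)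
    (hgen : Subgroup.closure ({a, b} : Set G) = ⊤) :
    ∃ u v w : G, u * v * w = 1 ∧
      orderOf u = (if n % 2 = 0 then n / 2 else n) ∧
      orderOf v = (if n % 2 = 0 then n / 2 else n) ∧
      orderOf w = (if n % 2 = 0 then n / 2 else n) ∧
      Subgroup.closure ({u, v, w} : Set G) = ⊤ := by
  have ha2 : a ^ 2 = 1 := ha ▸ pow_orderOf_eq_one a
  have hb3 : b ^ 3 = 1 := hb ▸ pow_orderOf_eq_one b
  have horder (g : G) :
      orderOf (g * (a * b) ^ 2 * g⁻¹) = if n % 2 = 0 then n / 2 else n := by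
    rw [← MulAut.conj_apply, MulEquiv.orderOf_eq, orderOf_sq, hab]
  refine ⟨b * (a * b) ^ 2 * b⁻¹, (a * b) ^ 2, b⁻¹ * (a * b) ^ 2 * b,
    conj_sq_mul_sq_mul_conj_inv_sq_eq_one ha2 hb3, horder b, by rw [orderOf_sq, hab],
    by simpa using horder b⁻¹, ?_⟩
  have hfin : ∀ g ∈ ({a, b} : Set G), IsOfFinOrder g := by
    rintro g (rfl | rfl) <;> rw [← orderOf_pos_iff] <;> omega
  have := normal_closure_of_conj_mem hgen hfin (conj_mem_closure_conj_sq ha2 hb3)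
  exact eq_top_of_mul_sq_mem hgen hindex ha2 hb3 (subset_closure (by simp))

/-- If a finite group `G` with no subgroup of index 2 is a smooth quotient of
the triangle group `Δ(2, 3, n)` with `n ≥ 7`, then `G` is a smooth quotient of
`Δ(t, t, t)`, where `t = n/2` if `n` is even and `t = n` if `n` is odd. -/
theorem smooth_ttt_quotient_of_23n {G : Type*} [Group G] [Finite G]
    (hindex : ∀ H : Subgroup G, H.index ≠ 2)
    (a b : G) (n : ℕ) (hn : 7 ≤ n)
    (ha : orderOf a = 2) (hb : orderOf b = 3) (hab : orderOf (a * b) = n)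
    (hgen : Subgroup.closure ({a, b} : Set G) = ⊤) :
    ∃ u v w : G, u * v * w = 1 ∧
      orderOf u = (if n % 2 = 0 then n / 2 else n) ∧
      orderOf v = (if n % 2 = 0 then n / 2 else n) ∧
      orderOf w = (if n % 2 = 0 then n / 2 else n) ∧
      Subgroup.closure ({u, v, w} : Set G) = ⊤ :=
  smooth_ttt_quotient_of_23n_general hindex a b n ha hb hab hgen
end

section
/- Let G be a finite group with no subgroup of index 2, and suppose G is generated by elements a, b where a has order exactly 2, b has order exactly 3, and ab has order exactly n, for some integer n ≥ 7. Set t = n/2 if n is even and t = n if n is odd. Then the direct product G × S₃ (where S₃ is the symmetric group on 3 letters) is generated by elements X, Y such that X has order exactly 2, Y has order exactly 3, and XY has order exactly 2t. -/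
/-- If a finite group `G` with no subgroup of index 2 is a smooth quotient of
the triangle group `Δ(2, 3, n)` with `n ≥ 7`, and `t = n/2` or `n` as `n` is
even or odd, then `G × S₃` is generated by elements `X, Y` of orders exactly
`2` and `3` with `XY` of order exactly `2t`. -/
theorem prod_s3_generated_23_2t {G : Type*} [Group G] [Finite G]
    (hindex : ∀ H : Subgroup G, H.index ≠ 2)
    (a b : G) (n : ℕ) (hn : 7 ≤ n)
    (ha : orderOf a = 2) (hb : orderOf b = 3) (hab : orderOf (a * b) = n)
    (hgen : Subgroup.closure ({a, b} : Set G) = ⊤) :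
    ∃ X Y : G × Equiv.Perm (Fin 3),
      orderOf X = 2 ∧ orderOf Y = 3 ∧
      orderOf (X * Y) = 2 * (if n % 2 = 0 then n / 2 else n) ∧
      Subgroup.closure ({X, Y} : Set (G × Equiv.Perm (Fin 3))) = ⊤ := by
  classical
  set τ : Equiv.Perm (Fin 3) := Equiv.swap 0 1 with hτdef
  set σ : Equiv.Perm (Fin 3) := finRotate 3 with hσdef
  have hτ : orderOf τ = 2 := by
    apply orderOf_eq_prime
    · decide
    · decide
  have hσ : orderOf σ = 3 := by
    apply orderOf_eq_prime
    · decide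
    · decide
  have hτσ : orderOf (τ * σ) = 2 := by
    apply orderOf_eq_prime
    · decide
    · decide
  refine ⟨(a, τ), (b, σ), ?_, ?_, ?_, ?_⟩
  · rw [Prod.orderOf]; simp [ha, hτ]
  · rw [Prod.orderOf]; simp [hb, hσ]
  · have : (a, τ) * (b, σ) = (a * b, τ * σ) := rfl
    rw [this, Prod.orderOf]
    simp only [hab, hτσ]
    by_cases hpar : n % 2 = 0
    · have h2 : 2 ∣ n := Nat.dvd_of_mod_eq_zero hpar
      have hl : Nat.lcm n 2 = n :=
        Nat.dvd_antisymm (Nat.lcm_dvd dvd_rfl h2) (Nat.dvd_lcm_left n 2)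
      rw [hl, if_pos hpar]
      omega
    · have hcop : Nat.Coprime n 2 := by
        have h2 : ¬ (2 ∣ n) := by omega
        exact ((Nat.Prime.coprime_iff_not_dvd Nat.prime_two).mpr h2).symm
      rw [Nat.Coprime.lcm_eq_mul hcop, if_neg hpar]
      omega
  · -- generation
    have hconj : ∀ s t : Equiv.Perm (Fin 3), Equiv.Perm.sign s = -1 →
        Equiv.Perm.sign t = -1 → ∃ c : Equiv.Perm (Fin 3), c * s * c⁻¹ = t := by decide
    have hsplit : ∀ t : Equiv.Perm (Fin 3), Equiv.Perm.sign t = 1 →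
        ∃ u v : Equiv.Perm (Fin 3), Equiv.Perm.sign u = -1 ∧ Equiv.Perm.sign v = -1 ∧
        u * v = t := by decide
    have hlist : ∀ u : Equiv.Perm (Fin 3), u = 1 ∨ u = finRotate 3 ∨ u = finRotate 3 ^ 2 ∨
        u = Equiv.swap 0 1 ∨ u = Equiv.swap 0 1 * finRotate 3 ∨
        u = Equiv.swap 0 1 * finRotate 3 ^ 2 := by decide
    set X : G × Equiv.Perm (Fin 3) := (a, τ) with hX
    set Y : G × Equiv.Perm (Fin 3) := (b, σ) with hY
    set H := Subgroup.closure ({X, Y} : Set (G × Equiv.Perm (Fin 3))) with hH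
    have hXm : X ∈ H := Subgroup.subset_closure (by simp)
    have hYm : Y ∈ H := Subgroup.subset_closure (by simp)
    -- first projection is surjective
    have hproj1 : ∀ g : G, ∃ s : Equiv.Perm (Fin 3), (g, s) ∈ H := by
      intro g
      have hmap : Subgroup.map (MonoidHom.fst G (Equiv.Perm (Fin 3))) H = ⊤ := by
        rw [hH, MonoidHom.map_closure]
        have : (MonoidHom.fst G (Equiv.Perm (Fin 3))) '' {X, Y} = {a, b} := by
          simp [hX, hY, Set.image_pair]
        rw [this, hgen]
      have : g ∈ Subgroup.map (MonoidHom.fst G (Equiv.Perm (Fin 3))) H := by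
        rw [hmap]; trivial
      obtain ⟨⟨g', s⟩, hmem, hg'⟩ := this
      exact ⟨s, by simpa [show g' = g from hg'] using hmem⟩
    by_cases hodd : ∃ s : Equiv.Perm (Fin 3), ((1 : G), s) ∈ H ∧ Equiv.Perm.sign s = -1
    · -- K contains an odd element; show H = ⊤
      obtain ⟨s, hsH, hsgn⟩ := hodd
      -- all odd perms are in the kernel K
      have hK_odd : ∀ t : Equiv.Perm (Fin 3), Equiv.Perm.sign t = -1 → ((1 : G), t) ∈ H := by
        intro t htsgn
        obtain ⟨c, hc⟩ := hconj s t hsgn htsgn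
        have hproj2 : ∃ g : G, (g, c) ∈ H := by
          have hmap : Subgroup.map (MonoidHom.snd G (Equiv.Perm (Fin 3))) H = ⊤ := by
            rw [hH, MonoidHom.map_closure]
            have him : (MonoidHom.snd G (Equiv.Perm (Fin 3))) '' {X, Y} = {τ, σ} := by
              simp [hX, hY, Set.image_pair]
            rw [him]
            rw [eq_top_iff]
            intro u _
            have hτm : τ ∈ Subgroup.closure ({τ, σ} : Set (Equiv.Perm (Fin 3))) :=
              Subgroup.subset_closure (by simp)
            have hσm : σ ∈ Subgroup.closure ({τ, σ} : Set (Equiv.Perm (Fin 3))) :=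
              Subgroup.subset_closure (by simp)
            rcases hlist u with h|h|h|h|h|h <;> rw [hτdef, hσdef] <;> subst h
            · exact Subgroup.one_mem _
            · exact hσm
            · exact pow_mem hσm 2
            · exact hτm
            · exact mul_mem hτm hσm
            · exact mul_mem hτm (pow_mem hσm 2)
          have : c ∈ Subgroup.map (MonoidHom.snd G (Equiv.Perm (Fin 3))) H := by
            rw [hmap]; trivial
          obtain ⟨⟨g, c'⟩, hmem, hc'⟩ := this
          exact ⟨g, by simpa [show c' = c from hc'] using hmem⟩
        obtain ⟨g, hgcH⟩ := hproj2
        have := mul_mem (mul_mem hgcH hsH) (inv_mem hgcH)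
        have heq : ((g, c) * ((1 : G), s) * (g, c)⁻¹ : G × Equiv.Perm (Fin 3))
            = ((1 : G), t) := by
          simp [Prod.ext_iff, hc, mul_assoc]
        rwa [heq] at this
      -- hence K = everything
      have hK_all : ∀ t : Equiv.Perm (Fin 3), ((1 : G), t) ∈ H := by
        intro t
        rcases Int.units_eq_one_or (Equiv.Perm.sign t) with hs1 | hs1
        · have : ∃ u v : Equiv.Perm (Fin 3),
              Equiv.Perm.sign u = -1 ∧ Equiv.Perm.sign v = -1 ∧ u * v = t := by
            revert hs1; revert t; decide
          obtain ⟨u, v, hu, hv, huv⟩ := this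
          have := mul_mem (hK_odd u hu) (hK_odd v hv)
          simpa [huv] using this
        · exact hK_odd t hs1
      rw [eq_top_iff]
      rintro ⟨g, u⟩ -
      obtain ⟨s₀, hs₀⟩ := hproj1 g
      have := mul_mem hs₀ (hK_all (s₀⁻¹ * u))
      simpa using this
    · -- all kernel elements even: construct an index-2 subgroup, contradiction
      exfalso
      push_neg at hodd
      have heven : ∀ s : Equiv.Perm (Fin 3), ((1 : G), s) ∈ H → Equiv.Perm.sign s = 1 := by
        intro s hs
        rcases Int.units_eq_one_or (Equiv.Perm.sign s) with h1 | h1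
        · exact h1
        · exact absurd h1 (hodd s hs)
      set L : Subgroup G :=
        { carrier := {g | ∃ s : Equiv.Perm (Fin 3), Equiv.Perm.sign s = 1 ∧ (g, s) ∈ H}
          one_mem' := ⟨1, by simp, Subgroup.one_mem H⟩
          mul_mem' := by
            rintro x y ⟨s, hs, hxs⟩ ⟨u, hu, hyu⟩
            exact ⟨s * u, by simp [hs, hu], by simpa using mul_mem hxs hyu⟩
          inv_mem' := by
            rintro x ⟨s, hs, hxs⟩
            exact ⟨s⁻¹, by simp [hs], by simpa using inv_mem hxs⟩ } with hLdef
      have hmemL : ∀ g : G, g ∈ L ↔ ∃ s : Equiv.Perm (Fin 3),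
          Equiv.Perm.sign s = 1 ∧ (g, s) ∈ H := fun g => Iff.rfl
      have hsignτ : Equiv.Perm.sign τ = -1 := by decide
      -- key dichotomy
      have key : ∀ g : G, ∀ s : Equiv.Perm (Fin 3), (g, s) ∈ H →
          (Equiv.Perm.sign s = 1 → g ∈ L) ∧ (Equiv.Perm.sign s = -1 → g ∉ L) := by
        intro g s hgs
        constructor
        · intro h1; exact ⟨s, h1, hgs⟩
        · intro h1 hgL
          obtain ⟨u, hu, hgu⟩ := hgL
          have := mul_mem (inv_mem hgs) hgu
          have hmem : ((1 : G), s⁻¹ * u) ∈ H := by simpa using this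
          have := heven _ hmem
          rw [map_mul, map_inv, h1, hu] at this
          simp at this
      have hLindex : L.index = 2 := by
        rw [Subgroup.index_eq_two_iff]
        refine ⟨a, fun g => ?_⟩
        obtain ⟨s, hgs⟩ := hproj1 g
        have hgas : (g * a, s * τ) ∈ H := by
          have := mul_mem hgs hXm
          simpa [hX] using this
        rcases Int.units_eq_one_or (Equiv.Perm.sign s) with h1 | h1
        · -- g ∈ L, g*a ∉ L
          refine Or.inr ⟨(key g s hgs).1 h1, (key (g * a) (s * τ) hgas).2 ?_⟩
          rw [map_mul, h1, hsignτ]; simp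
        · -- g ∉ L, g*a ∈ L
          refine Or.inl ⟨(key (g * a) (s * τ) hgas).1 ?_, (key g s hgs).2 h1⟩
          rw [map_mul, h1, hsignτ]; simp
      exact hindex L hLindex
end

section
/- Let p ≥ 5 be a prime and let G = (ℤ/pℤ) × (ℤ/pℤ), written additively. Let (a₁,b₁,c₁) and (a₂,b₂,c₂) be triples of non-zero elements of G with a₁ + b₁ + c₁ = 0 and a₂ + b₂ + c₂ = 0, each of which generates G. Then these two triples form an unmixed Beauville structure on G if and only if for every x ∈ {a₁,b₁,c₁} and every y ∈ {a₂,b₂,c₂} the cyclic subgroups generated by x and by y intersect trivially (equivalently, x and y span distinct lines of the 2-dimensional 𝔽_p-vector space G). -/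
/-- An unmixed Beauville structure on an additive group `G` (conjugacy being
trivial in an abelian group, the compatibility condition reads: whenever
`i • x = j • y` for `x` in the first triple and `y` in the second, then
`i • x = 0`). -/
def IsAddBeauvilleStructure {G : Type*} [AddCommGroup G] (a₁ b₁ c₁ a₂ b₂ c₂ : G) : Prop :=
  a₁ + b₁ + c₁ = 0 ∧ a₂ + b₂ + c₂ = 0 ∧
  AddSubgroup.closure ({a₁, b₁, c₁} : Set G) = ⊤ ∧
  AddSubgroup.closure ({a₂, b₂, c₂} : Set G) = ⊤ ∧
  (1 : ℚ) / (addOrderOf a₁ : ℚ) + 1 / (addOrderOf b₁ : ℚ) + 1 / (addOrderOf c₁ : ℚ) < 1 ∧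
  (1 : ℚ) / (addOrderOf a₂ : ℚ) + 1 / (addOrderOf b₂ : ℚ) + 1 / (addOrderOf c₂ : ℚ) < 1 ∧
  ∀ x ∈ ({a₁, b₁, c₁} : Set G), ∀ y ∈ ({a₂, b₂, c₂} : Set G),
    ∀ i j : ℤ, i • x = j • y → i • x = 0

/-- For a prime `p ≥ 5` and `G = (ℤ/pℤ)²`, two generating triples of non-zero
elements with zero sum form an unmixed Beauville structure if and only if the
cyclic subgroups generated by an element of one triple and an element of the
other always intersect trivially. -/
theorem zmod_sq_beauville_iff (p : ℕ) (hp : p.Prime) (hp5 : 5 ≤ p)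
    (a₁ b₁ c₁ a₂ b₂ c₂ : ZMod p × ZMod p)
    (ha₁ : a₁ ≠ 0) (hb₁ : b₁ ≠ 0) (hc₁ : c₁ ≠ 0)
    (ha₂ : a₂ ≠ 0) (hb₂ : b₂ ≠ 0) (hc₂ : c₂ ≠ 0)
    (hsum₁ : a₁ + b₁ + c₁ = 0) (hsum₂ : a₂ + b₂ + c₂ = 0)
    (hgen₁ : AddSubgroup.closure ({a₁, b₁, c₁} : Set (ZMod p × ZMod p)) = ⊤)
    (hgen₂ : AddSubgroup.closure ({a₂, b₂, c₂} : Set (ZMod p × ZMod p)) = ⊤) :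
    IsAddBeauvilleStructure a₁ b₁ c₁ a₂ b₂ c₂ ↔
      ∀ x ∈ ({a₁, b₁, c₁} : Set (ZMod p × ZMod p)),
        ∀ y ∈ ({a₂, b₂, c₂} : Set (ZMod p × ZMod p)),
          AddSubgroup.zmultiples x ⊓ AddSubgroup.zmultiples y = ⊥ := by

  have hord : ∀ x : ZMod p × ZMod p, x ≠ 0 → addOrderOf x = p := by
    intro x hx
    have h1 : ∀ a : ZMod p, p • a = 0 := fun a => by
      rw [nsmul_eq_mul, ZMod.natCast_self, zero_mul]
    have h : p • x = 0 := Prod.ext (by simp [h1]) (by simp [h1])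
    rcases hp.eq_one_or_self_of_dvd _ (addOrderOf_dvd_of_nsmul_eq_zero h) with h2 | h2
    · rw [AddMonoid.addOrderOf_eq_one_iff] at h2
      exact absurd h2 hx
    · exact h2
  have hineq : ∀ x y z : ZMod p × ZMod p, x ≠ 0 → y ≠ 0 → z ≠ 0 →
      (1 : ℚ) / (addOrderOf x : ℚ) + 1 / (addOrderOf y : ℚ) + 1 / (addOrderOf z : ℚ) < 1 := by
    intro x y z hx hy hz
    rw [hord x hx, hord y hy, hord z hz]
    have hpq : (5 : ℚ) ≤ (p : ℚ) := by exact_mod_cast hp5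
    have h5 : (1 : ℚ) / (p : ℚ) ≤ 1 / 5 := by
      apply one_div_le_one_div_of_le <;> norm_num
      linarith
    linarith
  constructor
  · rintro ⟨-, -, -, -, -, -, h⟩ x hx y hy
    rw [eq_bot_iff]
    intro z hz
    rw [AddSubgroup.mem_inf] at hz
    obtain ⟨hi, hzi⟩ := AddSubgroup.mem_zmultiples_iff.mp hz.1
    obtain ⟨hj, hzj⟩ := AddSubgroup.mem_zmultiples_iff.mp hz.2
    have := h x hx y hy hi hj (by rw [hzi, hzj])
    rw [AddSubgroup.mem_bot, ← hzi]
    exact this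
  · intro h
    refine ⟨hsum₁, hsum₂, hgen₁, hgen₂, hineq _ _ _ ha₁ hb₁ hc₁, hineq _ _ _ ha₂ hb₂ hc₂,
      ?_⟩
    intro x hx y hy i j hij
    have hmem : i • x ∈ AddSubgroup.zmultiples x ⊓ AddSubgroup.zmultiples y := by
      rw [AddSubgroup.mem_inf]
      exact ⟨AddSubgroup.mem_zmultiples_iff.mpr ⟨i, rfl⟩,
        AddSubgroup.mem_zmultiples_iff.mpr ⟨j, hij.symm⟩⟩
    rw [h x hx y hy, AddSubgroup.mem_bot] at hmem
    exact hmem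
end
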